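/- (Weak duality for RoBN) Let M = {M_ab} be a distributed measurement in R_BN. Suppose {A_ab}, {B_b}, {C_a} are families of Hermitian matrices on ℂ^{d_A} ⊗ ℂ^{d_B} and D, E are positive semidefinite matrices on ℂ^{d_A} and ℂ^{d_B} respectively, satisfying: A_ab is positive semidefinite for all a, b; the partial trace over the B factor of C_a equals D for every a; the partial trace over the A factor of B_b equals E for every b; tr D + tr E = 1; and Σ_{a,b} tr[(C_a + B_b − A_ab) X_ab] ≥ 0 for every family {X_ab} ∈ F_BN. Then Σ_{a,b} tr[A_ab M_ab] ≤ 1 + RoBN(M). -/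

import Mathlib

open Matrix BigOperators Kronecker ComplexOrder

noncomputable section

/-- Square complex matrices of size `n`. -/
abbrev Mat (n : ℕ) : Type := Matrix (Fin n) (Fin n) ℂ

/-- Bipartite complex matrices on `ℂ^m ⊗ ℂ^n`. -/
abbrev BMat (m n : ℕ) : Type := Matrix (Fin m × Fin n) (Fin m × Fin n) ℂ

/-- A density matrix: positive semidefinite with unit trace. -/
def IsDensity {n : Type} [Fintype n] (ρ : Matrix n n ℂ) : Prop :=
  ρ.PosSemidef ∧ ρ.trace = 1

/-- A POVM: a finite family of positive semidefinite matrices summing to the identity. -/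
def IsPOVM {ι n : Type} [Fintype ι] [Fintype n] [DecidableEq n]
    (M : ι → Matrix n n ℂ) : Prop :=
  (∀ i, (M i).PosSemidef) ∧ ∑ i, M i = 1

/-- A separable bipartite operator: a finite convex combination of products of
density matrices. -/
def SepState {dA dB : ℕ} (ρ : BMat dA dB) : Prop :=
  ∃ (n : ℕ) (p : Fin n → ℝ) (ρA : Fin n → Mat dA) (ρB : Fin n → Mat dB),
    (∀ l, 0 ≤ p l) ∧ (∑ l, p l = 1) ∧
    (∀ l, IsDensity (ρA l)) ∧ (∀ l, IsDensity (ρB l)) ∧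
    ρ = ∑ l, (p l : ℂ) • (ρA l ⊗ₖ ρB l)

/-- The element `tr_{A'B'}[(Ma ⊗ Mb)(1^A ⊗ ρ^{A'B'} ⊗ 1^B)]` of a distributed
measurement (written out entrywise, after the canonical reordering of tensor factors). -/
def distMeas {dA dA' dB' dB : ℕ}
    (Ma : Matrix (Fin dA × Fin dA') (Fin dA × Fin dA') ℂ)
    (Mb : Matrix (Fin dB' × Fin dB) (Fin dB' × Fin dB) ℂ)
    (ρ : BMat dA' dB') : BMat dA dB :=
  Matrix.of fun pq rs =>
    ∑ k : Fin dA', ∑ l : Fin dB', ∑ k' : Fin dA', ∑ l' : Fin dB',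
      Ma (pq.1, k) (rs.1, k') * Mb (l, pq.2) (l', rs.2) * ρ (k', l') (k, l)

/-- Membership in `R_BN`: the family arises from local POVMs and a shared state. -/
def MemRBN {dA dB oA oB : ℕ} (M : Fin oA → Fin oB → BMat dA dB) : Prop :=
  ∃ (dA' dB' : ℕ)
    (Ma : Fin oA → Matrix (Fin dA × Fin dA') (Fin dA × Fin dA') ℂ)
    (Mb : Fin oB → Matrix (Fin dB' × Fin dB) (Fin dB' × Fin dB) ℂ)
    (ρ : BMat dA' dB'),
    IsPOVM Ma ∧ IsPOVM Mb ∧ IsDensity ρ ∧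
    ∀ a b, M a b = distMeas (Ma a) (Mb b) ρ

/-- Membership in `F_BN`: the family arises from local POVMs and a separable shared state. -/
def MemFBN {dA dB oA oB : ℕ} (M : Fin oA → Fin oB → BMat dA dB) : Prop :=
  ∃ (dA' dB' : ℕ)
    (Ma : Fin oA → Matrix (Fin dA × Fin dA') (Fin dA × Fin dA') ℂ)
    (Mb : Fin oB → Matrix (Fin dB' × Fin dB) (Fin dB' × Fin dB) ℂ)
    (ρ : BMat dA' dB'),
    IsPOVM Ma ∧ IsPOVM Mb ∧ IsDensity ρ ∧ SepState ρ ∧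
    ∀ a b, M a b = distMeas (Ma a) (Mb b) ρ

/-- Robustness of Buscemi nonlocality. -/
def RoBN {dA dB oA oB : ℕ} (M : Fin oA → Fin oB → BMat dA dB) : ℝ :=
  sInf { r : ℝ | 0 ≤ r ∧ ∃ (N O : Fin oA → Fin oB → BMat dA dB),
    MemRBN N ∧ MemFBN O ∧
    ∀ a b, M a b + (r : ℂ) • N a b = ((1 + r : ℝ) : ℂ) • O a b }

/-- Quantum simulation of a distributed measurement: shared randomness, local
pre-processing channels (given by Kraus operators) in the Heisenberg picture,
and classical post-processing of outcomes. -/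
def Simulates {dA dB oA oB oA' oB' : ℕ}
    (M : Fin oA → Fin oB → BMat dA dB)
    (M' : Fin oA' → Fin oB' → BMat dA dB) : Prop :=
  ∃ (nL : ℕ) (pL : Fin nL → ℝ)
    (pA : Fin oA' → Fin oA → Fin nL → ℝ)
    (pB : Fin oB' → Fin oB → Fin nL → ℝ)
    (kE : Fin nL → ℕ) (KE : (l : Fin nL) → Fin (kE l) → Mat dA)
    (kN : Fin nL → ℕ) (KN : (l : Fin nL) → Fin (kN l) → Mat dB),
    (∀ l, 0 ≤ pL l) ∧ (∑ l, pL l = 1) ∧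
    (∀ a i l, 0 ≤ pA a i l) ∧ (∀ i l, ∑ a, pA a i l = 1) ∧
    (∀ b j l, 0 ≤ pB b j l) ∧ (∀ j l, ∑ b, pB b j l = 1) ∧
    (∀ l, ∑ s : Fin (kE l), (KE l s)ᴴ * KE l s = 1) ∧
    (∀ l, ∑ t : Fin (kN l), (KN l t)ᴴ * KN l t = 1) ∧
    ∀ a b, M' a b = ∑ l : Fin nL, ∑ i : Fin oA, ∑ j : Fin oB,
      ((pL l * pA a i l * pB b j l : ℝ) : ℂ) •
        ∑ s : Fin (kE l), ∑ t : Fin (kN l),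
          (KE l s ⊗ₖ KN l t)ᴴ * M i j * (KE l s ⊗ₖ KN l t)

/-- An ensemble of bipartite states: a probability distribution together with
density matrices. -/
def IsEnsemble {dA dB oA oB : ℕ} (p : Fin oA → Fin oB → ℝ)
    (σ : Fin oA → Fin oB → BMat dA dB) : Prop :=
  (∀ x y, 0 ≤ p x y) ∧ (∑ x, ∑ y, p x y = 1) ∧ ∀ x y, IsDensity (σ x y)

/-- Guessing probability in distributed state discrimination with a distributed
measurement `M`. -/
def pDSD {dA dB oA oB : ℕ} (p : Fin oA → Fin oB → ℝ)
    (σ : Fin oA → Fin oB → BMat dA dB)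
    (M : Fin oA → Fin oB → BMat dA dB) : ℝ :=
  sSup { v : ℝ | ∃ N : Fin oA → Fin oB → BMat dA dB, Simulates M N ∧
    v = ∑ x : Fin oA, ∑ y : Fin oB, p x y * ((N x y * σ x y).trace).re }

/-- Classical value of distributed state discrimination. -/
def pDSDc {dA dB oA oB : ℕ} (p : Fin oA → Fin oB → ℝ)
    (σ : Fin oA → Fin oB → BMat dA dB) : ℝ :=
  sSup { v : ℝ | ∃ N : Fin oA → Fin oB → BMat dA dB, MemFBN N ∧ v = pDSD p σ N }

/-- The subchannel `ω ↦ tr_{AA'}[(Ma ⊗ 1^{B'})(ω ⊗ ρ^{A'B'})]` of a teleportation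
instrument (written out entrywise). -/
def telep {dA dA' dB' : ℕ}
    (Ma : Matrix (Fin dA × Fin dA') (Fin dA × Fin dA') ℂ)
    (ρ : BMat dA' dB') (ω : Mat dA) : Mat dB' :=
  Matrix.of fun l l' =>
    ∑ i : Fin dA, ∑ k : Fin dA', ∑ i' : Fin dA, ∑ k' : Fin dA',
      Ma (i, k) (i', k') * ω i' i * ρ (k', l) (k, l')

/-- Membership in `R_T`: the instrument is a teleportation instrument. -/
def MemRT {dA dB' oA : ℕ} (Λ : Fin oA → Mat dA → Mat dB') : Prop :=
  ∃ (dA' : ℕ) (Ma : Fin oA → Matrix (Fin dA × Fin dA') (Fin dA × Fin dA') ℂ)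
    (ρ : BMat dA' dB'),
    IsPOVM Ma ∧ IsDensity ρ ∧ ∀ a ω, Λ a ω = telep (Ma a) ρ ω

/-- Membership in `F_T`: a teleportation instrument realizable with a separable state. -/
def MemFT {dA dB' oA : ℕ} (Λ : Fin oA → Mat dA → Mat dB') : Prop :=
  ∃ (dA' : ℕ) (Ma : Fin oA → Matrix (Fin dA × Fin dA') (Fin dA × Fin dA') ℂ)
    (ρ : BMat dA' dB'),
    IsPOVM Ma ∧ IsDensity ρ ∧ SepState ρ ∧ ∀ a ω, Λ a ω = telep (Ma a) ρ ω

/-- Robustness of teleportation. -/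
def RoT {dA dB' oA : ℕ} (Λ : Fin oA → Mat dA → Mat dB') : ℝ :=
  sInf { r : ℝ | 0 ≤ r ∧ ∃ (Ω Γ : Fin oA → Mat dA → Mat dB'),
    MemRT Ω ∧ MemFT Γ ∧
    ∀ a ω, Λ a ω + (r : ℂ) • Ω a ω = ((1 + r : ℝ) : ℂ) • Γ a ω }

/-- Quantum simulation of a teleportation instrument:
`Φ_a = Σ_{i,λ} p(λ) p(a|i,λ) E_λ ∘ Λ_i ∘ N_λ` with channels given by Kraus operators. -/
def SimInstr {dA dB' o o' : ℕ} (Λ : Fin o → Mat dA → Mat dB')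
    (Φ : Fin o' → Mat dA → Mat dB') : Prop :=
  ∃ (nL : ℕ) (pL : Fin nL → ℝ) (pA : Fin o' → Fin o → Fin nL → ℝ)
    (kN : Fin nL → ℕ) (KN : (l : Fin nL) → Fin (kN l) → Mat dA)
    (kE : Fin nL → ℕ) (KE : (l : Fin nL) → Fin (kE l) → Mat dB'),
    (∀ l, 0 ≤ pL l) ∧ (∑ l, pL l = 1) ∧
    (∀ a i l, 0 ≤ pA a i l) ∧ (∀ i l, ∑ a, pA a i l = 1) ∧
    (∀ l, ∑ s : Fin (kN l), (KN l s)ᴴ * KN l s = 1) ∧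
    (∀ l, ∑ t : Fin (kE l), (KE l t)ᴴ * KE l t = 1) ∧
    ∀ a ω, Φ a ω = ∑ l : Fin nL, ∑ i : Fin o,
      ((pL l * pA a i l : ℝ) : ℂ) •
        ∑ t : Fin (kE l),
          KE l t * Λ i (∑ s : Fin (kN l), KN l s * ω * (KN l s)ᴴ) * (KE l t)ᴴ

/-- `(Φ ⊗ id^B)[σ]` for a map `Φ` acting on the first tensor factor. -/
def appFst {dA dB' dB : ℕ} (Φ : Mat dA → Mat dB') (σ : BMat dA dB) : BMat dB' dB :=
  Matrix.of fun pq rs =>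
    Φ (Matrix.of fun i i' => σ (i, pq.2) (i', rs.2)) pq.1 rs.1

/-- Guessing probability in teleportation-assisted state discrimination with
instrument `Λ`. -/
def pTSD {dA dB' o dB oA oB : ℕ} (p : Fin oA → Fin oB → ℝ)
    (σ : Fin oA → Fin oB → BMat dA dB)
    (Λ : Fin o → Mat dA → Mat dB') : ℝ :=
  sSup { v : ℝ | ∃ (Mb : Fin oB → Matrix (Fin dB' × Fin dB) (Fin dB' × Fin dB) ℂ)
      (Φ : Fin oA → Mat dA → Mat dB'),
    IsPOVM Mb ∧ SimInstr Λ Φ ∧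
    v = ∑ x : Fin oA, ∑ y : Fin oB,
      p x y * ((Mb y * appFst (Φ x) (σ x y)).trace).re }

/-- Classical value of teleportation-assisted state discrimination. -/
def pTSDc (dB' : ℕ) {dA dB oA oB : ℕ} (p : Fin oA → Fin oB → ℝ)
    (σ : Fin oA → Fin oB → BMat dA dB) : ℝ :=
  sSup { v : ℝ | ∃ (o' : ℕ) (F : Fin o' → Mat dA → Mat dB'),
    MemFT F ∧ v = pTSD p σ F }

/-- Generalized robustness of entanglement. -/
def RoE {dA dB : ℕ} (ρ : BMat dA dB) : ℝ :=
  sInf { r : ℝ | 0 ≤ r ∧ ∃ (η σ : BMat dA dB),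
    IsDensity η ∧ IsDensity σ ∧ SepState σ ∧
    ρ + (r : ℂ) • η = ((1 + r : ℝ) : ℂ) • σ }

/-- Guessing probability in entanglement-assisted state discrimination with
shared state `ρ`. -/
def pESD {dA dB oA oB dA' dB' : ℕ} (p : Fin oA → Fin oB → ℝ)
    (σ : Fin oA → Fin oB → BMat dA dB) (ρ : BMat dA' dB') : ℝ :=
  sSup { v : ℝ | ∃ (Ma : Fin oA → Matrix (Fin dA × Fin dA') (Fin dA × Fin dA') ℂ)
      (Mb : Fin oB → Matrix (Fin dB' × Fin dB) (Fin dB' × Fin dB) ℂ),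
    IsPOVM Ma ∧ IsPOVM Mb ∧
    v = ∑ x : Fin oA, ∑ y : Fin oB,
      p x y * ((distMeas (Ma x) (Mb y) ρ * σ x y).trace).re }

/-- Classical value of entanglement-assisted state discrimination. -/
def pESDc {dA dB oA oB : ℕ} (p : Fin oA → Fin oB → ℝ)
    (σ : Fin oA → Fin oB → BMat dA dB) : ℝ :=
  sSup { v : ℝ | ∃ (dA' dB' : ℕ) (ρ : BMat dA' dB'),
    IsDensity ρ ∧ SepState ρ ∧ v = pESD p σ ρ }

/-- Partial trace over the second tensor factor. -/
def ptraceSnd {m n : Type} [Fintype n] (M : Matrix (m × n) (m × n) ℂ) : Matrix m m ℂ :=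
  Matrix.of fun i j => ∑ k : n, M (i, k) (j, k)

/-- Partial trace over the first tensor factor. -/
def ptraceFst {m n : Type} [Fintype m] (M : Matrix (m × n) (m × n) ℂ) : Matrix n n ℂ :=
  Matrix.of fun i j => ∑ k : m, M (k, i) (k, j)

/-- Average score in a general no-signalling game with scoring function `V`. -/
def pV {dA dB oA oB nX nY : ℕ} (p : Fin nX → Fin nY → ℝ)
    (σ : Fin nX → Fin nY → BMat dA dB)
    (V : Fin oA → Fin oB → Fin nX → Fin nY → ℝ)
    (M : Fin oA → Fin oB → BMat dA dB) : ℝ :=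
  ∑ a : Fin oA, ∑ b : Fin oB, ∑ x : Fin nX, ∑ y : Fin nY,
    p x y * ((M a b * σ x y).trace).re * V a b x y

/-- Min-accessible information of a channel, with base-2 logarithms. -/
def IaccMin {dA dB : ℕ} {out : Type} [Fintype out] [DecidableEq out]
    (N : BMat dA dB → Matrix out out ℂ) : ℝ :=
  sSup { v : ℝ | ∃ (n m : ℕ) (p : Fin n → ℝ) (σ : Fin n → BMat dA dB)
      (D : Fin m → Matrix out out ℂ),
    (∀ x, 0 ≤ p x) ∧ (∑ x, p x = 1) ∧ (∀ x, IsDensity (σ x)) ∧ IsPOVM D ∧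
    v = Real.logb 2 (∑ g : Fin m, ⨆ x : Fin n, p x * ((N (σ x) * D g).trace).re)
      - Real.logb 2 (⨆ x : Fin n, p x) }

/-!
If `r` is feasible for `RoBN M`, then `M = (1 + r) O - r N` with `O ∈ F_BN` and `N ∈ R_BN`.
On any family realised by POVMs and a normalised shared state, summing out Bob's outcomes leaves
`C_a` paired with Alice's reduced effects, which sum to the identity, so the `C`-terms give
`tr D`; symmetrically the `B`-terms give `tr E`. The dual constraint on `O` therefore reads
`Σ tr[A O] ≤ tr D + tr E = 1`, while `Σ tr[A N] ≥ 0` because `A` and `N` are positive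
semidefinite; hence `Σ tr[A M] ≤ 1 + r`. Feasible `r` exist: with `σ = 1/d` maximally mixed
(a product state), `ρ + d η = (1 + d) σ` for `η = (σ + (1 - ρ))/d`, a state since `ρ ≤ 1`.
-/

namespace Matrix

section PosSemidef

variable {n : Type*} [Fintype n]

lemma PosSemidef.exists_eq_conjTranspose_mul_self [DecidableEq n] {X : Matrix n n ℂ}
    (hX : X.PosSemidef) : ∃ F : Matrix n n ℂ, X = Fᴴ * F := by
  open scoped MatrixOrder Matrix.Norms.L2Operator in
  exact CStarAlgebra.nonneg_iff_eq_star_mul_self.mp hX.nonneg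

lemma PosSemidef.re_trace_mul_nonneg [DecidableEq n] {X Y : Matrix n n ℂ}
    (hX : X.PosSemidef) (hY : Y.PosSemidef) : 0 ≤ (X * Y).trace.re := by
  obtain ⟨F, rfl⟩ := hX.exists_eq_conjTranspose_mul_self
  rw [Matrix.mul_assoc, trace_mul_comm]
  exact (Complex.nonneg_iff.mp (hY.mul_mul_conjTranspose_same F).trace_nonneg).1

open scoped MatrixOrder in
lemma PosSemidef.le_algebraMap_re_trace [DecidableEq n] {ρ : Matrix n n ℂ} (hρ : ρ.PosSemidef) :
    ρ ≤ algebraMap ℝ (Matrix n n ℂ) ρ.trace.re := by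
  refine le_algebraMap_of_spectrum_le (fun x hx => ?_) hρ.1.isSelfAdjoint
  obtain ⟨i, rfl⟩ := hρ.1.spectrum_real_eq_range_eigenvalues ▸ hx
  rw [hρ.1.trace_eq_sum_eigenvalues, Complex.re_sum]
  exact Finset.single_le_sum (fun j _ => hρ.eigenvalues_nonneg j) (Finset.mem_univ i)

end PosSemidef

lemma trace_mul_kronecker_one {m n : Type} [Fintype m] [Fintype n] [DecidableEq n]
    (C : Matrix (m × n) (m × n) ℂ) (X : Matrix m m ℂ) :
    (C * (X ⊗ₖ (1 : Matrix n n ℂ))).trace = (ptraceSnd C * X).trace := by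
  simp only [trace, diag, mul_apply, kroneckerMap_apply, ptraceSnd, of_apply, one_apply,
    Fintype.sum_prod_type, mul_ite, mul_one, mul_zero, Finset.sum_ite_eq', Finset.mem_univ,
    if_true, Finset.sum_mul]
  exact Finset.sum_congr rfl fun _ _ => Finset.sum_comm

lemma trace_mul_one_kronecker {m n : Type} [Fintype m] [Fintype n] [DecidableEq m]
    (B : Matrix (m × n) (m × n) ℂ) (Y : Matrix n n ℂ) :
    (B * ((1 : Matrix m m ℂ) ⊗ₖ Y)).trace = (ptraceFst B * Y).trace := by
  simp only [trace, diag, mul_apply, kroneckerMap_apply, ptraceFst, of_apply, one_apply,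
    Fintype.sum_prod_type, ite_mul, one_mul, zero_mul, mul_ite, mul_zero, Finset.sum_ite_irrel,
    Finset.sum_const_zero, Finset.sum_ite_eq', Finset.mem_univ, if_true, Finset.sum_mul]
  rw [Finset.sum_comm]
  exact Finset.sum_congr rfl fun _ _ => Finset.sum_comm

end Matrix

open scoped MatrixOrder in
lemma IsDensity.one_sub_posSemidef {n : Type} [Fintype n] [DecidableEq n] {ρ : Matrix n n ℂ}
    (hρ : IsDensity ρ) : (1 - ρ).PosSemidef := by
  simpa [hρ.2] using Matrix.le_iff.mp hρ.1.le_algebraMap_re_trace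

lemma isDensity_inv_card_smul_one {n : Type} [Fintype n] [DecidableEq n] [Nonempty n] :
    IsDensity (((Fintype.card n : ℂ)⁻¹) • (1 : Matrix n n ℂ)) := by
  refine ⟨PosSemidef.one.smul (by simp), ?_⟩
  simp

lemma sepState_kronecker {m n : ℕ} {a : Mat m} {b : Mat n} (ha : IsDensity a) (hb : IsDensity b) :
    SepState (a ⊗ₖ b) :=
  ⟨1, fun _ => 1, fun _ => a, fun _ => b, fun _ => zero_le_one, by simp, fun _ => ha, fun _ => hb,
    by simp⟩

lemma sepState_inv_card_smul_one {m n : ℕ} [Nonempty (Fin m)] [Nonempty (Fin n)] :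
    SepState (((Fintype.card (Fin m × Fin n) : ℂ)⁻¹) • (1 : BMat m n)) := by
  convert sepState_kronecker (isDensity_inv_card_smul_one (n := Fin m))
    (isDensity_inv_card_smul_one (n := Fin n)) using 1
  rw [smul_kronecker, kronecker_smul, one_kronecker_one, smul_smul, Fintype.card_prod,
    Nat.cast_mul, mul_inv, mul_comm]

lemma IsDensity.exists_add_smul_eq_smul_sepState {m n : ℕ} {ρ : BMat m n} (hρ : IsDensity ρ) :
    ∃ (r : ℝ) (η σ : BMat m n), 0 ≤ r ∧ IsDensity η ∧ IsDensity σ ∧ SepState σ ∧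
      ρ + (r : ℂ) • η = ((1 + r : ℝ) : ℂ) • σ := by
  have : Nonempty (Fin m × Fin n) := by
    by_contra h
    rw [not_nonempty_iff] at h
    simpa [trace] using hρ.2
  obtain ⟨_, _⟩ := nonempty_prod.mp this
  set d := Fintype.card (Fin m × Fin n)
  have hd : (d : ℂ) ≠ 0 := Nat.cast_ne_zero.mpr Fintype.card_ne_zero
  set σ : BMat m n := (d : ℂ)⁻¹ • 1
  have hσ : IsDensity σ := isDensity_inv_card_smul_one
  refine ⟨d, (d : ℂ)⁻¹ • (σ + (1 - ρ)), σ, d.cast_nonneg, ⟨?_, ?_⟩, hσ,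
    sepState_inv_card_smul_one, ?_⟩
  · exact (hσ.1.add hρ.one_sub_posSemidef).smul (by simp)
  · rw [trace_smul, trace_add, trace_sub, hσ.2, hρ.2, trace_one, smul_eq_mul]
    field_simp
    ring
  · push_cast
    rw [smul_smul, mul_inv_cancel₀ hd, one_smul, add_smul, one_smul, smul_smul, mul_inv_cancel₀ hd,
      one_smul]
    abel

section DistMeas

variable {dA dA' dB' dB : ℕ}

lemma distMeas_apply (Ma : Matrix (Fin dA × Fin dA') (Fin dA × Fin dA') ℂ)
    (Mb : Matrix (Fin dB' × Fin dB) (Fin dB' × Fin dB) ℂ) (ρ : BMat dA' dB')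
    (pq rs : Fin dA × Fin dB) :
    distMeas Ma Mb ρ pq rs = ∑ c : (Fin dA' × Fin dB') × (Fin dA' × Fin dB'),
      Ma (pq.1, c.1.1) (rs.1, c.2.1) * Mb (c.1.2, pq.2) (c.2.2, rs.2) * ρ c.2 c.1 := by
  simp only [distMeas, of_apply, Fintype.sum_prod_type]

lemma distMeas_sum_state {ι : Type} [Fintype ι]
    (Ma : Matrix (Fin dA × Fin dA') (Fin dA × Fin dA') ℂ)
    (Mb : Matrix (Fin dB' × Fin dB) (Fin dB' × Fin dB) ℂ) (ρ : ι → BMat dA' dB') :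
    distMeas Ma Mb (∑ j, ρ j) = ∑ j, distMeas Ma Mb (ρ j) := by
  refine Matrix.ext fun pq rs => ?_
  simp only [distMeas_apply, Matrix.sum_apply, Finset.mul_sum]
  exact Finset.sum_comm

/-- `1_A ⊗ v ⊗ 1_B`, with the tensor factors ordered as in `Ma ⊗ₖ Mb`. -/
def stateEmbedding (dA dB : ℕ) (v : Fin dA' × Fin dB' → ℂ) :
    Matrix ((Fin dA × Fin dA') × (Fin dB' × Fin dB)) (Fin dA × Fin dB) ℂ :=
  of fun x y => if x.1.1 = y.1 ∧ x.2.2 = y.2 then v (x.1.2, x.2.1) else 0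

lemma distMeas_vecMulVec (Ma : Matrix (Fin dA × Fin dA') (Fin dA × Fin dA') ℂ)
    (Mb : Matrix (Fin dB' × Fin dB) (Fin dB' × Fin dB) ℂ) (v : Fin dA' × Fin dB' → ℂ) :
    distMeas Ma Mb (vecMulVec v (star v)) =
      (stateEmbedding dA dB v)ᴴ * (Ma ⊗ₖ Mb) * stateEmbedding dA dB v := by
  refine Matrix.ext fun pq rs => ?_
  simp only [distMeas, vecMulVec_apply, Pi.star_apply, RCLike.star_def, of_apply, stateEmbedding,
    ite_and, Matrix.mul_apply, conjTranspose_apply, apply_ite star, star_zero, kroneckerMap_apply,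
    ite_mul, zero_mul, Fintype.sum_prod_type, Finset.sum_ite_irrel, Finset.sum_ite_eq',
    Finset.mem_univ, if_true, Finset.sum_const_zero, mul_ite, mul_zero]
  simp only [Finset.sum_mul, ← Fintype.sum_prod_type']
  refine Fintype.sum_equiv ((Equiv.prodAssoc _ _ _).symm.trans
    ((Equiv.prodComm _ _).trans (Equiv.prodAssoc _ _ _))) _ _ fun _ => ?_
  simp only [Equiv.trans_apply, Equiv.prodAssoc_symm_apply, Equiv.prodComm_apply, Prod.swap,
    Equiv.prodAssoc_apply]
  ring

lemma distMeas_posSemidef {Ma : Matrix (Fin dA × Fin dA') (Fin dA × Fin dA') ℂ}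
    {Mb : Matrix (Fin dB' × Fin dB) (Fin dB' × Fin dB) ℂ} {ρ : BMat dA' dB'}
    (hMa : Ma.PosSemidef) (hMb : Mb.PosSemidef) (hρ : ρ.PosSemidef) :
    (distMeas Ma Mb ρ).PosSemidef := by
  obtain ⟨m, v, rfl⟩ := posSemidef_iff_eq_sum_vecMulVec.mp hρ
  rw [distMeas_sum_state]
  refine posSemidef_sum _ fun j _ => ?_
  rw [distMeas_vecMulVec]
  exact (hMa.kronecker hMb).conjTranspose_mul_mul_same _

lemma distMeas_add_state (Ma : Matrix (Fin dA × Fin dA') (Fin dA × Fin dA') ℂ)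
    (Mb : Matrix (Fin dB' × Fin dB) (Fin dB' × Fin dB) ℂ) (ρ η : BMat dA' dB') :
    distMeas Ma Mb (ρ + η) = distMeas Ma Mb ρ + distMeas Ma Mb η := by
  refine Matrix.ext fun pq rs => ?_
  simp only [distMeas_apply, Matrix.add_apply, mul_add, Finset.sum_add_distrib]

lemma distMeas_smul_state (Ma : Matrix (Fin dA × Fin dA') (Fin dA × Fin dA') ℂ)
    (Mb : Matrix (Fin dB' × Fin dB) (Fin dB' × Fin dB) ℂ) (c : ℂ) (ρ : BMat dA' dB') :
    distMeas Ma Mb (c • ρ) = c • distMeas Ma Mb ρ := by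
  refine Matrix.ext fun pq rs => ?_
  simp only [distMeas_apply, Matrix.smul_apply, smul_eq_mul, Finset.mul_sum]
  exact Finset.sum_congr rfl fun _ _ => by ring

lemma sum_distMeas_fst {ι : Type} [Fintype ι]
    (Ma : ι → Matrix (Fin dA × Fin dA') (Fin dA × Fin dA') ℂ)
    (Mb : Matrix (Fin dB' × Fin dB) (Fin dB' × Fin dB) ℂ) (ρ : BMat dA' dB') :
    ∑ i, distMeas (Ma i) Mb ρ = distMeas (∑ i, Ma i) Mb ρ := by
  refine Matrix.ext fun pq rs => ?_
  simp only [distMeas_apply, Matrix.sum_apply, Finset.sum_mul]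
  exact Finset.sum_comm

lemma sum_distMeas_snd {ι : Type} [Fintype ι]
    (Ma : Matrix (Fin dA × Fin dA') (Fin dA × Fin dA') ℂ)
    (Mb : ι → Matrix (Fin dB' × Fin dB) (Fin dB' × Fin dB) ℂ) (ρ : BMat dA' dB') :
    ∑ i, distMeas Ma (Mb i) ρ = distMeas Ma (∑ i, Mb i) ρ := by
  refine Matrix.ext fun pq rs => ?_
  simp only [distMeas_apply, Matrix.sum_apply, Finset.sum_mul, Finset.mul_sum]
  exact Finset.sum_comm

end DistMeas

section Effects

variable {dA dA' dB' dB : ℕ}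

/-- `tr_{A'}[Ma (1 ⊗ tr_{B'} ρ)]` -/
def effectFst (Ma : Matrix (Fin dA × Fin dA') (Fin dA × Fin dA') ℂ) (ρ : BMat dA' dB') :
    Mat dA :=
  of fun p r => ∑ k, ∑ k', Ma (p, k) (r, k') * ptraceSnd ρ k' k

def effectSnd (Mb : Matrix (Fin dB' × Fin dB) (Fin dB' × Fin dB) ℂ) (ρ : BMat dA' dB') :
    Mat dB :=
  of fun q s => ∑ l, ∑ l', Mb (l, q) (l', s) * ptraceFst ρ l' l

lemma distMeas_one_snd (Ma : Matrix (Fin dA × Fin dA') (Fin dA × Fin dA') ℂ) (ρ : BMat dA' dB') :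
    distMeas Ma 1 ρ = effectFst Ma ρ ⊗ₖ (1 : Mat dB) := by
  refine Matrix.ext fun pq rs => ?_
  simp only [distMeas, one_apply, Prod.mk.injEq, ite_and, mul_ite, mul_one, mul_zero, ite_mul,
    zero_mul, Finset.sum_ite_eq, Finset.mem_univ, ↓reduceIte, Finset.sum_ite_irrel,
    Finset.sum_const_zero, of_apply, effectFst, ptraceSnd, Finset.mul_sum, kroneckerMap_apply]
  exact if_congr Iff.rfl (Finset.sum_congr rfl fun _ _ => Finset.sum_comm) rfl

lemma distMeas_one_fst (Mb : Matrix (Fin dB' × Fin dB) (Fin dB' × Fin dB) ℂ) (ρ : BMat dA' dB') :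
    distMeas 1 Mb ρ = (1 : Mat dA) ⊗ₖ effectSnd Mb ρ := by
  refine Matrix.ext fun pq rs => ?_
  simp only [distMeas, one_apply, Prod.mk.injEq, ite_and, ite_mul, one_mul, zero_mul,
    Finset.sum_ite_irrel, Finset.sum_const_zero, Finset.sum_ite_eq, Finset.mem_univ, ↓reduceIte,
    of_apply, effectSnd, ptraceFst, Finset.mul_sum, kroneckerMap_apply]
  rw [Finset.sum_comm]
  exact if_congr Iff.rfl (Finset.sum_congr rfl fun _ _ => Finset.sum_comm) rfl

lemma sum_effectFst {ι : Type} [Fintype ι]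
    (Ma : ι → Matrix (Fin dA × Fin dA') (Fin dA × Fin dA') ℂ) (ρ : BMat dA' dB') :
    ∑ i, effectFst (Ma i) ρ = effectFst (∑ i, Ma i) ρ := by
  refine Matrix.ext fun p r => ?_
  simp only [effectFst, Matrix.sum_apply, of_apply, Finset.sum_mul]
  rw [Finset.sum_comm]
  exact Finset.sum_congr rfl fun _ _ => Finset.sum_comm

lemma sum_effectSnd {ι : Type} [Fintype ι]
    (Mb : ι → Matrix (Fin dB' × Fin dB) (Fin dB' × Fin dB) ℂ) (ρ : BMat dA' dB') :
    ∑ i, effectSnd (Mb i) ρ = effectSnd (∑ i, Mb i) ρ := by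
  refine Matrix.ext fun q s => ?_
  simp only [effectSnd, Matrix.sum_apply, of_apply, Finset.sum_mul]
  rw [Finset.sum_comm]
  exact Finset.sum_congr rfl fun _ _ => Finset.sum_comm

lemma effectFst_one (ρ : BMat dA' dB') :
    effectFst (1 : Matrix (Fin dA × Fin dA') _ ℂ) ρ = ρ.trace • 1 := by
  refine Matrix.ext fun p r => ?_
  simp [effectFst, one_apply, ptraceSnd, trace, Fintype.sum_prod_type, ite_and]

lemma effectSnd_one (ρ : BMat dA' dB') :
    effectSnd (1 : Matrix (_ × Fin dB) _ ℂ) ρ = ρ.trace • 1 := by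
  refine Matrix.ext fun p r => ?_
  simp only [effectSnd, ptraceFst, trace, diag_apply, of_apply, one_apply, Prod.mk.injEq, ite_and,
    ite_mul, one_mul, zero_mul, Finset.sum_ite_eq, Finset.mem_univ, if_true, Finset.sum_ite_irrel,
    Finset.sum_const_zero, Fintype.sum_prod_type, Matrix.smul_apply, smul_eq_mul, mul_ite, mul_one,
    mul_zero]
  exact if_congr Iff.rfl Finset.sum_comm rfl

end Effects

section TraceIdentities

variable {dA dA' dB' dB oA oB : ℕ}
  {Ma : Fin oA → Matrix (Fin dA × Fin dA') (Fin dA × Fin dA') ℂ}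
  {Mb : Fin oB → Matrix (Fin dB' × Fin dB) (Fin dB' × Fin dB) ℂ} {ρ : BMat dA' dB'}

lemma sum_trace_mul_distMeas_of_ptraceSnd_eq (hMa : ∑ a, Ma a = 1) (hMb : ∑ b, Mb b = 1)
    (hρ : ρ.trace = 1) {C : Fin oA → BMat dA dB} {D : Mat dA} (hCD : ∀ a, ptraceSnd (C a) = D) :
    ∑ a, ∑ b, (C a * distMeas (Ma a) (Mb b) ρ).trace = D.trace := by
  calc ∑ a, ∑ b, (C a * distMeas (Ma a) (Mb b) ρ).trace
      = ∑ a, (D * effectFst (Ma a) ρ).trace := by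
        refine Finset.sum_congr rfl fun a _ => ?_
        rw [← Matrix.trace_sum, ← Matrix.mul_sum, sum_distMeas_snd, hMb, distMeas_one_snd,
          trace_mul_kronecker_one, hCD]
    _ = D.trace := by
        rw [← Matrix.trace_sum, ← Matrix.mul_sum, sum_effectFst, hMa, effectFst_one, hρ, one_smul,
          Matrix.mul_one]

lemma sum_trace_mul_distMeas_of_ptraceFst_eq (hMa : ∑ a, Ma a = 1) (hMb : ∑ b, Mb b = 1)
    (hρ : ρ.trace = 1) {B : Fin oB → BMat dA dB} {E : Mat dB} (hBE : ∀ b, ptraceFst (B b) = E) :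
    ∑ a, ∑ b, (B b * distMeas (Ma a) (Mb b) ρ).trace = E.trace := by
  calc ∑ a, ∑ b, (B b * distMeas (Ma a) (Mb b) ρ).trace
      = ∑ b, (E * effectSnd (Mb b) ρ).trace := by
        rw [Finset.sum_comm]
        refine Finset.sum_congr rfl fun b _ => ?_
        rw [← Matrix.trace_sum, ← Matrix.mul_sum, sum_distMeas_fst, hMa, distMeas_one_fst,
          trace_mul_one_kronecker, hBE]
    _ = E.trace := by
        rw [← Matrix.trace_sum, ← Matrix.mul_sum, sum_effectSnd, hMb, effectSnd_one, hρ, one_smul,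
          Matrix.mul_one]

end TraceIdentities

section Robustness

variable {dA dB oA oB : ℕ}

lemma MemFBN.memRBN {O : Fin oA → Fin oB → BMat dA dB} (hO : MemFBN O) : MemRBN O :=
  let ⟨dA', dB', Ma, Mb, ρ, hMa, hMb, hρ, _, hO⟩ := hO
  ⟨dA', dB', Ma, Mb, ρ, hMa, hMb, hρ, hO⟩

lemma MemRBN.sum_trace_mul_add_eq {O : Fin oA → Fin oB → BMat dA dB} (hO : MemRBN O)
    {B : Fin oB → BMat dA dB} {C : Fin oA → BMat dA dB} {D : Mat dA} {E : Mat dB}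
    (hCD : ∀ a, ptraceSnd (C a) = D) (hBE : ∀ b, ptraceFst (B b) = E) :
    ∑ a, ∑ b, ((C a + B b) * O a b).trace = D.trace + E.trace := by
  obtain ⟨_, _, Ma, Mb, ρ, hMa, hMb, hρ, hO⟩ := hO
  simp only [hO, Matrix.add_mul, trace_add, Finset.sum_add_distrib]
  rw [sum_trace_mul_distMeas_of_ptraceSnd_eq hMa.2 hMb.2 hρ.2 hCD,
    sum_trace_mul_distMeas_of_ptraceFst_eq hMa.2 hMb.2 hρ.2 hBE]

lemma MemRBN.re_sum_trace_mul_nonneg {N : Fin oA → Fin oB → BMat dA dB} (hN : MemRBN N)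
    {A : Fin oA → Fin oB → BMat dA dB} (hA : ∀ a b, (A a b).PosSemidef) :
    0 ≤ (∑ a, ∑ b, (A a b * N a b).trace).re := by
  obtain ⟨_, _, Ma, Mb, ρ, hMa, hMb, hρ, hN⟩ := hN
  simp only [Complex.re_sum, hN]
  exact Finset.sum_nonneg fun a _ => Finset.sum_nonneg fun b _ =>
    (hA a b).re_trace_mul_nonneg (distMeas_posSemidef (hMa.1 a) (hMb.1 b) hρ.1)

def IsRoBNFeasible (M : Fin oA → Fin oB → BMat dA dB) (r : ℝ) : Prop :=
  0 ≤ r ∧ ∃ (N O : Fin oA → Fin oB → BMat dA dB), MemRBN N ∧ MemFBN O ∧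
    ∀ a b, M a b + (r : ℂ) • N a b = ((1 + r : ℝ) : ℂ) • O a b

lemma MemRBN.exists_isRoBNFeasible {M : Fin oA → Fin oB → BMat dA dB} (hM : MemRBN M) :
    ∃ r, IsRoBNFeasible M r := by
  obtain ⟨dA', dB', Ma, Mb, ρ, hMa, hMb, hρ, hM⟩ := hM
  obtain ⟨r, η, σ, hr, hη, hσ, hsep, hdec⟩ := hρ.exists_add_smul_eq_smul_sepState
  refine ⟨r, hr, _, _, ⟨dA', dB', Ma, Mb, η, hMa, hMb, hη, fun _ _ => rfl⟩,
    ⟨dA', dB', Ma, Mb, σ, hMa, hMb, hσ, hsep, fun _ _ => rfl⟩, fun a b => ?_⟩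
  rw [hM, ← distMeas_smul_state, ← distMeas_add_state, hdec, distMeas_smul_state]

lemma IsRoBNFeasible.re_sum_trace_mul_le {M : Fin oA → Fin oB → BMat dA dB} {r : ℝ}
    (hr : IsRoBNFeasible M r) {A : Fin oA → Fin oB → BMat dA dB} {B : Fin oB → BMat dA dB}
    {C : Fin oA → BMat dA dB} {D : Mat dA} {E : Mat dB} (hA : ∀ a b, (A a b).PosSemidef)
    (hCD : ∀ a, ptraceSnd (C a) = D) (hBE : ∀ b, ptraceFst (B b) = E)
    (hTr : D.trace + E.trace = 1)
    (hF : ∀ X : Fin oA → Fin oB → BMat dA dB, MemFBN X →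
      0 ≤ (∑ a, ∑ b, ((C a + B b - A a b) * X a b).trace).re) :
    (∑ a, ∑ b, (A a b * M a b).trace).re ≤ 1 + r := by
  obtain ⟨hr, N, O, hN, hO, hMNO⟩ := hr
  have hAO : (∑ a, ∑ b, (A a b * O a b).trace).re ≤ 1 := by
    have := hF O hO
    simp only [Matrix.sub_mul, trace_sub, Finset.sum_sub_distrib] at this
    rw [hO.memRBN.sum_trace_mul_add_eq hCD hBE, hTr, Complex.sub_re, Complex.one_re] at this
    linarith
  have hAN := hN.re_sum_trace_mul_nonneg hA
  have hM : ∀ a b, M a b = ((1 + r : ℝ) : ℂ) • O a b - (r : ℂ) • N a b :=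
    fun a b => eq_sub_of_add_eq (hMNO a b)
  simp only [hM, Matrix.mul_sub, Matrix.mul_smul, trace_sub, trace_smul, smul_eq_mul,
    Finset.sum_sub_distrib, ← Finset.mul_sum, Complex.sub_re, Complex.re_ofReal_mul]
  nlinarith

end Robustness

theorem robn_weak_duality_general {dA dB oA oB : ℕ}
    (M : Fin oA → Fin oB → BMat dA dB) (hM : MemRBN M)
    (A : Fin oA → Fin oB → BMat dA dB) (B : Fin oB → BMat dA dB)
    (C : Fin oA → BMat dA dB) (D : Mat dA) (E : Mat dB)
    (hApsd : ∀ a b, (A a b).PosSemidef)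
    (hCD : ∀ a, ptraceSnd (C a) = D)
    (hBE : ∀ b, ptraceFst (B b) = E)
    (hTr : D.trace + E.trace = 1)
    (hF : ∀ X : Fin oA → Fin oB → BMat dA dB, MemFBN X →
      0 ≤ (∑ a, ∑ b, ((C a + B b - A a b) * X a b).trace).re) :
    (∑ a, ∑ b, (A a b * M a b).trace).re ≤ 1 + RoBN M := by
  have h := le_csInf hM.exists_isRoBNFeasible fun r (hr : IsRoBNFeasible M r) =>
    sub_le_iff_le_add'.mpr (hr.re_sum_trace_mul_le hApsd hCD hBE hTr hF)
  exact sub_le_iff_le_add'.mp h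

/-- weak duality for RoBN: any feasible family of dual variables
gives a lower bound on `1 + RoBN(M)`. -/
theorem robn_weak_duality {dA dB oA oB : ℕ}
    (M : Fin oA → Fin oB → BMat dA dB) (hM : MemRBN M)
    (A : Fin oA → Fin oB → BMat dA dB) (B : Fin oB → BMat dA dB)
    (C : Fin oA → BMat dA dB) (D : Mat dA) (E : Mat dB)
    (hAh : ∀ a b, (A a b).IsHermitian) (hBh : ∀ b, (B b).IsHermitian)
    (hCh : ∀ a, (C a).IsHermitian)
    (hD : D.PosSemidef) (hE : E.PosSemidef)
    (hApsd : ∀ a b, (A a b).PosSemidef)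
    (hCD : ∀ a, ptraceSnd (C a) = D)
    (hBE : ∀ b, ptraceFst (B b) = E)
    (hTr : D.trace + E.trace = 1)
    (hF : ∀ X : Fin oA → Fin oB → BMat dA dB, MemFBN X →
      0 ≤ (∑ a, ∑ b, ((C a + B b - A a b) * X a b).trace).re) :
    (∑ a, ∑ b, (A a b * M a b).trace).re ≤ 1 + RoBN M :=
  robn_weak_duality_general M hM A B C D E hApsd hCD hBE hTr hF
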